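/- Let X be a Banach space which is the 1-unconditional sum of a family (X_λ)_{λ∈Λ} of closed subspaces, i.e.: X_λ ∩ X_μ = {0} for distinct λ, μ; ‖Σ_{λ∈F} x_λ‖ ≤ ‖Σ_{λ∈G} x_λ‖ whenever F ⊆ G are finite subsets of Λ and x_λ ∈ X_λ for λ ∈ G; and the linear span of ⋃_λ X_λ is dense in X. If each X_λ is weakly Lindelöf determined, then X is 1-Plichko; moreover D = {f ∈ X* : {λ ∈ Λ : f restricted to X_λ is not identically 0} is countable} is a 1-norming subspace of X* and there is a set S ⊆ X with dense linear span such that D = {f ∈ X* : {s ∈ S : f(s) ≠ 0} is countable}. -/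

import Mathlib

/-!
In a 1-unconditional sum, the coordinate projection onto `⨁_{λ ∈ F} X_λ`, for `F` finite, is a
contraction on the algebraic sum `⨆ λ, X_λ`. Composing a norming functional of a finitely supported
`y` with this projection and extending by Hahn–Banach gives a functional of norm at most one that
norms `y` and vanishes on all but finitely many `X_λ`; such `y` are dense, so `D` is 1-norming.
With `S_λ` witnessing that `X_λ` is WLD and `S = ⋃ S_λ`, a functional has countable support on `S`
iff it is nonzero on only countably many `X_λ`: one direction because each `S_λ` is WLD, the other
because the `X_λ` meet only in `0`, so distinct `λ` yield distinct points of `S`.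
-/

def IsOneUnconditional {R X Λ : Type*} [Semiring R] [NormedAddCommGroup X] [Module R X]
    (Xl : Λ → Submodule R X) : Prop :=
  ∀ F G : Finset Λ, F ⊆ G → ∀ x : Λ → X, (∀ l ∈ G, x l ∈ Xl l) →
    ‖∑ l ∈ F, x l‖ ≤ ‖∑ l ∈ G, x l‖

namespace IsOneUnconditional

section

variable {R X Λ : Type*} [Ring R] [NormedAddCommGroup X] [Module R X] {Xl : Λ → Submodule R X}

theorem norm_lsum_filter_le [DecidableEq Λ] (h : IsOneUnconditional Xl) (d : Π₀ l, Xl l)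
    (p : Λ → Prop) [DecidablePred p] :
    ‖DFinsupp.lsum ℕ (fun l => (Xl l).subtype) (d.filter p)‖ ≤
      ‖DFinsupp.lsum ℕ (fun l => (Xl l).subtype) d‖ := by
  classical
  simp only [DFinsupp.lsum_apply_apply, DFinsupp.sumAddHom_apply, DFinsupp.sum,
    DFinsupp.support_filter]
  convert h _ _ (Finset.filter_subset p d.support) (fun l => (d l : X)) (fun l _ => (d l).2)
    using 3 with l hl l
  · simp [(Finset.mem_filter.mp hl).2]
  · rfl

theorem norm_apply_le_norm_lsum [DecidableEq Λ] (h : IsOneUnconditional Xl) (d : Π₀ l, Xl l)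
    (l : Λ) :
    ‖(d l : X)‖ ≤ ‖DFinsupp.lsum ℕ (fun l => (Xl l).subtype) d‖ := by
  simpa using h.norm_lsum_filter_le d (· = l)

theorem lsum_injective [DecidableEq Λ] (h : IsOneUnconditional Xl) :
    Function.Injective (DFinsupp.lsum ℕ (fun l => (Xl l).subtype)) := by
  refine (injective_iff_map_eq_zero _).mpr fun d hd => DFinsupp.ext fun l => ?_
  simpa [hd] using h.norm_apply_le_norm_lsum d l

theorem exists_contractive_proj (h : IsOneUnconditional Xl) (y : ↥(⨆ l, Xl l)) :
    ∃ (F : Finset Λ) (P : ↥(⨆ l, Xl l) →ₗ[R] X), (∀ v, ‖P v‖ ≤ ‖v‖) ∧ P y = y ∧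
      ∀ l ∉ F, ∀ z (hz : z ∈ Xl l), P ⟨z, Submodule.mem_iSup_of_mem l hz⟩ = 0 := by
  classical
  set T := DFinsupp.lsum ℕ (fun l => (Xl l).subtype)
  have hT : ∀ d, T d ∈ ⨆ l, Xl l := fun d => by
    rw [Submodule.iSup_eq_range_dfinsupp_lsum]; exact LinearMap.mem_range_self T d
  let e := LinearEquiv.ofBijective (T.codRestrict _ hT)
    ⟨fun d₁ d₂ hd => h.lsum_injective (congrArg Subtype.val hd), fun v => by
      obtain ⟨d, hd⟩ :=
        (Submodule.iSup_eq_range_dfinsupp_lsum Xl ▸ v.2 : (v : X) ∈ LinearMap.range T)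
      exact ⟨d, Subtype.ext hd⟩⟩
  have he : ∀ v, T (e.symm v) = v := fun v => congrArg Subtype.val (e.apply_symm_apply v)
  have he' : ∀ d, (e d : X) = T d := fun d => rfl
  set F := (e.symm y).support
  refine ⟨F, T ∘ₗ DFinsupp.filterLinearMap R _ (· ∈ F) ∘ₗ e.symm.toLinearMap, fun v => ?_, ?_,
    fun l hl z hz => ?_⟩
  · calc ‖T ((e.symm v).filter (· ∈ F))‖ ≤ ‖T (e.symm v)‖ := h.norm_lsum_filter_le _ _
      _ = ‖v‖ := by rw [he]; rfl
  · have : (e.symm y).filter (· ∈ F) = e.symm y := DFinsupp.ext fun l => by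
      by_cases hl : l ∈ F
      · exact DFinsupp.filter_apply_pos _ hl
      · rw [DFinsupp.filter_apply_neg _ hl, DFinsupp.notMem_support_iff.mp hl]
    simp [this, he]
  · have : e.symm ⟨z, Submodule.mem_iSup_of_mem l hz⟩ = DFinsupp.single l ⟨z, hz⟩ :=
      e.symm_apply_eq.mpr (Subtype.ext (by rw [he']; simp [T]))
    simp [this, DFinsupp.filter_single_neg _ _ hl]

end

theorem exists_norming_dual {𝕜 X Λ : Type*} [RCLike 𝕜] [NormedAddCommGroup X] [NormedSpace 𝕜 X]
    {Xl : Λ → Submodule 𝕜 X} (h : IsOneUnconditional Xl) {y : X} (hy : y ∈ ⨆ l, Xl l) :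
    ∃ f : X →L[𝕜] 𝕜, ‖f‖ ≤ 1 ∧ ‖f y‖ = ‖y‖ ∧ {l | ¬ ∀ z ∈ Xl l, f z = 0}.Finite := by
  obtain ⟨F, P, hP, hPy, hPF⟩ := h.exists_contractive_proj ⟨y, hy⟩
  obtain ⟨g, hg, hgy⟩ := exists_dual_vector'' 𝕜 y
  let φ : ↥(⨆ l, Xl l) →L[𝕜] 𝕜 := (g.toLinearMap ∘ₗ P).mkContinuous 1 fun v =>
    (g.le_of_opNorm_le hg (P v)).trans (by simpa using hP v)
  obtain ⟨f, hfφ, hfn⟩ := exists_extension_norm_eq _ φ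
  refine ⟨f, hfn ▸ LinearMap.mkContinuous_norm_le _ zero_le_one _, ?_,
    F.finite_toSet.subset fun l hl => ?_⟩
  · rw [hfφ ⟨y, hy⟩]
    simp [φ, hPy, hgy]
  · by_contra hlF
    exact hl fun z hz =>
      (hfφ ⟨z, Submodule.mem_iSup_of_mem l hz⟩).trans (by simp [φ, hPF l hlF z hz])

end IsOneUnconditional

theorem norm_eq_sSup_of_forall_mem_dense {𝕜 X : Type*} [NontriviallyNormedField 𝕜]
    [SeminormedAddCommGroup X] [NormedSpace 𝕜 X] {D : Set (X →L[𝕜] 𝕜)} {A : Set X}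
    (hA : Dense A) (hD : ∀ y ∈ A, ∃ f ∈ D, ‖f‖ ≤ 1 ∧ ‖f y‖ = ‖y‖) (x : X) :
    ‖x‖ = sSup {r | ∃ f ∈ D, ‖f‖ ≤ 1 ∧ r = ‖f x‖} := by
  have hle : ∀ r ∈ {r | ∃ f ∈ D, ‖f‖ ≤ 1 ∧ r = ‖f x‖}, r ≤ ‖x‖ := by
    rintro _ ⟨f, -, hf, rfl⟩
    simpa using f.le_of_opNorm_le hf x
  have hne : {r | ∃ f ∈ D, ‖f‖ ≤ 1 ∧ r = ‖f x‖}.Nonempty := by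
    obtain ⟨y, hy⟩ := hA.nonempty
    obtain ⟨f, hfD, hf, -⟩ := hD y hy
    exact ⟨_, f, hfD, hf, rfl⟩
  refine le_antisymm (le_of_forall_pos_le_add fun ε hε => ?_) (csSup_le hne hle)
  obtain ⟨y, hyA, hxy⟩ := Metric.mem_closure_iff.mp (hA x) (ε / 2) (half_pos hε)
  obtain ⟨f, hfD, hf, hfy⟩ := hD y hyA
  have hfx : ‖f x‖ ≤ sSup {r | ∃ f ∈ D, ‖f‖ ≤ 1 ∧ r = ‖f x‖} :=
    le_csSup ⟨‖x‖, hle⟩ ⟨f, hfD, hf, rfl⟩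
  have hfxy : ‖f y‖ - ‖f x‖ ≤ ‖x - y‖ := calc
    ‖f y‖ - ‖f x‖ ≤ ‖f (y - x)‖ := by rw [map_sub]; exact norm_sub_norm_le _ _
    _ ≤ ‖x - y‖ := by simpa [norm_sub_rev] using f.le_of_opNorm_le hf (y - x)
  have hxy' := norm_sub_norm_le x y
  rw [dist_eq_norm] at hxy
  linarith

section Sigma

variable {𝕜 X : Type*} [NontriviallyNormedField 𝕜] [SeminormedAddCommGroup X] [NormedSpace 𝕜 X]

def sigmaSubspace {ι : Type*} (A : ι → Set X) : Submodule 𝕜 (X →L[𝕜] 𝕜) where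
  carrier := {f | {i | ¬ ∀ x ∈ A i, f x = 0}.Countable}
  add_mem' {f g} hf hg := (hf.union hg).mono fun i hi => by
    contrapose! hi
    simp_all
  zero_mem' := by simp
  smul_mem' c f hf := hf.mono fun i hi => by
    contrapose! hi
    simp_all

variable {Λ : Type*} {Xl : Λ → Submodule 𝕜 X} {Sl : ∀ l, Set (Xl l)}

theorem dense_span_iUnion_image_val
    (hdense : Dense (Submodule.span 𝕜 (⋃ l, (Xl l : Set X)) : Set X))
    (hSl : ∀ l, Dense (Submodule.span 𝕜 (Sl l) : Set (Xl l))) :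
    Dense (Submodule.span 𝕜 (⋃ l, Subtype.val '' Sl l) : Set X) := by
  set S := ⋃ l, Subtype.val '' Sl l
  have hXl : ∀ l, (Xl l : Set X) ⊆ (Submodule.span 𝕜 S).topologicalClosure := fun l z hz =>
    map_mem_closure continuous_subtype_val (hSl l ⟨z, hz⟩) fun w hw =>
      Submodule.span_mono (Set.subset_iUnion (fun l => Subtype.val '' Sl l) l)
        (Submodule.apply_mem_span_image_of_mem_span (Xl l).subtype hw)
  refine dense_closure.mp (hdense.mono ?_)
  exact Submodule.span_le.mpr (Set.iUnion_subset hXl)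

theorem countable_setOf_apply_ne_zero_iff (hdisj : ∀ l m, l ≠ m → Xl l ⊓ Xl m = ⊥)
    (hSl : ∀ l, Dense (Submodule.span 𝕜 (Sl l) : Set (Xl l)))
    (hcount : ∀ l (g : Xl l →L[𝕜] 𝕜), {s ∈ Sl l | g s ≠ 0}.Countable) (f : X →L[𝕜] 𝕜) :
    {s ∈ ⋃ l, Subtype.val '' Sl l | f s ≠ 0}.Countable ↔
      {l | ¬ ∀ x ∈ Xl l, f x = 0}.Countable := by
  constructor
  · intro hS
    have hex : ∀ l ∈ {l | ¬ ∀ x ∈ Xl l, f x = 0}, ∃ s ∈ Subtype.val '' Sl l, f s ≠ 0 := by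
      intro l hl
      by_contra! hvanish
      refine hl fun x hx => ?_
      have : f.comp (Xl l).subtypeL = 0 :=
        ContinuousLinearMap.ext_on (hSl l) fun s hs => by
          simpa using hvanish _ (Set.mem_image_of_mem _ hs)
      simpa using DFunLike.congr_fun this ⟨x, hx⟩
    choose! s hsS hsf using hex
    have hmaps : Set.MapsTo s {l | ¬ ∀ x ∈ Xl l, f x = 0}
        {s ∈ ⋃ l, Subtype.val '' Sl l | f s ≠ 0} :=
      fun l hl => ⟨Set.mem_iUnion.mpr ⟨l, hsS l hl⟩, hsf l hl⟩
    refine hmaps.countable_of_injOn (fun l hl m hm hlm => ?_) hS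
    by_contra hne
    obtain ⟨⟨a, -, hal⟩, ⟨b, -, hbm⟩⟩ := And.intro (hsS l hl) (hsS m hm)
    have : s l ∈ Xl l ⊓ Xl m := ⟨hal ▸ a.2, hlm ▸ hbm ▸ b.2⟩
    rw [hdisj l m hne, Submodule.mem_bot] at this
    exact hsf l hl (by rw [this, map_zero])
  · intro hL
    refine (hL.biUnion fun l _ => (hcount l (f.comp (Xl l).subtypeL)).image Subtype.val).mono ?_
    rintro _ ⟨hs, hfs⟩
    obtain ⟨l, s, hsl, rfl⟩ := Set.mem_iUnion.mp hs
    exact Set.mem_biUnion (fun h => hfs (h _ s.2)) ⟨s, ⟨hsl, hfs⟩, rfl⟩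

end Sigma

theorem onePlichko_of_oneUnconditionalSum_of_wld
    {𝕜 : Type*} [RCLike 𝕜] {X : Type*} [NormedAddCommGroup X] [NormedSpace 𝕜 X]
    {Λ : Type*} (Xl : Λ → Submodule 𝕜 X)
    (hdisjoint : ∀ l m, l ≠ m → Xl l ⊓ Xl m = ⊥)
    (hmono : ∀ F G : Finset Λ, F ⊆ G → ∀ x : Λ → X, (∀ l ∈ G, x l ∈ Xl l) →
      ‖∑ l ∈ F, x l‖ ≤ ‖∑ l ∈ G, x l‖)
    (hdense : Dense (Submodule.span 𝕜 (⋃ l, (Xl l : Set X)) : Set X))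
    (hwld : ∀ l, ∃ S : Set ↥(Xl l),
      Dense (Submodule.span 𝕜 S : Set ↥(Xl l)) ∧
      ∀ f : ↥(Xl l) →L[𝕜] 𝕜, {s ∈ S | f s ≠ 0}.Countable) :
    ∃ (D : Submodule 𝕜 (X →L[𝕜] 𝕜)) (S : Set X),
      (D : Set (X →L[𝕜] 𝕜)) = {f | {l : Λ | ¬ ∀ x ∈ Xl l, f x = 0}.Countable} ∧
      Dense (Submodule.span 𝕜 S : Set X) ∧
      (D : Set (X →L[𝕜] 𝕜)) = {f | {s ∈ S | f s ≠ 0}.Countable} ∧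
      ∀ x : X, ‖x‖ = sSup {r : ℝ | ∃ f ∈ D, ‖f‖ ≤ 1 ∧ r = ‖f x‖} := by
  choose Sl hSl hcount using hwld
  refine ⟨sigmaSubspace fun l => (Xl l : Set X), ⋃ l, Subtype.val '' Sl l, rfl,
    dense_span_iUnion_image_val hdense hSl,
    Set.ext fun f => (countable_setOf_apply_ne_zero_iff hdisjoint hSl hcount f).symm, ?_⟩
  rw [← Submodule.iSup_eq_span] at hdense
  refine norm_eq_sSup_of_forall_mem_dense hdense fun y hy => ?_
  obtain ⟨f, hf, hfy, hfin⟩ := IsOneUnconditional.exists_norming_dual hmono hy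
  exact ⟨f, hfin.countable, hf, hfy⟩
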